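/- arXiv:2006.16946 — 2 statements merged into one kernel-verified Lean document; each statement's English description precedes it below -/
import Mathlib

section
/- Let f : ℂ → ℂ be continuous and let UO(f) denote the set of points with unbounded forward orbit. If X ⊆ UO(f) is σ-compact, then there exists a sequence (a_n) of positive reals with a_n → ∞ such that every z ∈ UO(f) satisfying |f^[n](z)| ≤ a_n for all n ≥ 0 lies outside X. -/
/-!
Each compact piece `K j` of `X` consists of points with unbounded orbits, and the sets
`{z | j + 1 < ‖f^[n] z‖}` are open, so by compactness every point of `K j` exceeds `j + 1`
within a uniform time `N j`. A sequence `a` tending to infinity slowly enough that `a n ≤ j + 1`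
for all `n ≤ N j` is then outrun by every orbit starting in `X`.
-/

open Filter Set

lemma IsCompact.exists_uniform_time_norm_gt {α E : Type*} [TopologicalSpace α]
    [SeminormedAddCommGroup E] {g : ℕ → α → E} (hg : ∀ n, Continuous (g n)) {K : Set α}
    (hK : IsCompact K) (hunb : ∀ z ∈ K, ¬ Bornology.IsBounded (range fun n => g n z)) (M : ℝ) :
    ∃ N : ℕ, ∀ z ∈ K, ∃ n ≤ N, M < ‖g n z‖ := by
  have hopen : ∀ n, IsOpen {z | M < ‖g n z‖} :=
    fun n => isOpen_lt continuous_const (hg n).norm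
  have hcover : K ⊆ ⋃ n, {z | M < ‖g n z‖} := by
    intro z hz
    by_contra hle
    simp only [mem_iUnion, mem_ofPred_eq, not_exists, not_lt] at hle
    exact hunb z hz (isBounded_iff_forall_norm_le.2 ⟨M, forall_mem_range.2 hle⟩)
  obtain ⟨t, ht⟩ := hK.elim_finite_subcover _ hopen hcover
  refine ⟨t.sup id, fun z hz => ?_⟩
  obtain ⟨n, hn, hzn⟩ := mem_iUnion₂.1 (ht hz)
  exact ⟨n, Finset.le_sup (f := id) hn, hzn⟩

lemma Nat.exists_tendsto_atTop_forall_le_of_le (N : ℕ → ℕ) :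
    ∃ u : ℕ → ℕ, Tendsto u atTop atTop ∧ ∀ j n, n ≤ N j → u n ≤ j := by
  classical
  have hex : ∀ n, ∃ j, n ≤ N j + j := fun n => ⟨n, Nat.le_add_left n (N n)⟩
  refine ⟨fun n => Nat.find (hex n), tendsto_atTop.2 fun b => ?_,
    fun j n hn => Nat.find_min' (hex n) (hn.trans (Nat.le_add_right _ _))⟩
  -- Once `n` exceeds `N j + j` for every `j < b`, no `j < b` satisfies `n ≤ N j + j`.
  filter_upwards [eventually_gt_atTop ((Finset.range b).sup fun j => N j + j)] with n hn
  by_contra! hlt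
  have hle : N (Nat.find (hex n)) + Nat.find (hex n) ≤
      (Finset.range b).sup fun j => N j + j :=
    Finset.le_sup (f := fun j => N j + j) (Finset.mem_range.2 hlt)
  exact absurd ((Nat.find_spec (hex n)).trans hle) (not_le.2 hn)

theorem sigmaCompact_avoided_by_slow_orbits (f : ℂ → ℂ) (hf : Continuous f)
    (UO : Set ℂ)
    (hUO : UO = {z : ℂ | ¬ Bornology.IsBounded (Set.range fun n : ℕ => f^[n] z)})
    (X : Set ℂ) (hXUO : X ⊆ UO) (hX : IsSigmaCompact X) :
    ∃ a : ℕ → ℝ, (∀ n, 0 < a n) ∧ Filter.Tendsto a Filter.atTop Filter.atTop ∧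
      ∀ z ∈ UO, (∀ n : ℕ, ‖f^[n] z‖ ≤ a n) → z ∉ X := by
  obtain ⟨K, hKc, rfl⟩ := hX
  have hesc (j : ℕ) : ∃ N : ℕ, ∀ z ∈ K j, ∃ n ≤ N, (j : ℝ) + 1 < ‖f^[n] z‖ :=
    (hKc j).exists_uniform_time_norm_gt (g := fun n => f^[n]) (fun n => hf.iterate n)
      (fun z hz => by simpa [hUO] using hXUO (mem_iUnion.2 ⟨j, hz⟩)) _
  choose N hN using hesc
  obtain ⟨u, hu, hle⟩ := Nat.exists_tendsto_atTop_forall_le_of_le N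
  refine ⟨fun n => u n + 1, fun n => by positivity,
    tendsto_atTop_add_const_right _ 1 (tendsto_natCast_atTop_atTop.comp hu), ?_⟩
  intro z _ hbound hzX
  obtain ⟨j, hzj⟩ := mem_iUnion.1 hzX
  obtain ⟨n, hn, hgt⟩ := hN j z hzj
  have hun : (u n : ℝ) ≤ j := by exact_mod_cast hle j n hn
  linarith [hbound n]
end

section
/- Let f : ℂ → ℂ be continuous and suppose that for every R₀ ≥ 0 there is M₀ > R₀ such that for every sequence (a_m) with a_m ≥ M₀ and a_m → ∞ there exist ζ with |f^[m](ζ)| ≤ a_m for all m and |f^[m](ζ)| → ∞, and ω with |f^[m](ω)| ≤ a_m for all m whose orbit is unbounded but not escaping. Then every σ-compact subset X of UO(f) omits some point of I(f) and some point of BU(f); in particular, none of I(f), BU(f), UO(f) is σ-compact. -/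
/-!
Write a σ-compact set `X ⊆ UO(f)` as `⋃ Kₙ` with `Kₙ` compact. Since the sets
`{z | |f^[j] z| > M₀ + n}` are open and cover `Kₙ`, finitely many of them do: every orbit
starting in `Kₙ` exceeds `M₀ + n` before some time `cₙ`. A sequence `a ≥ M₀` tending to `∞`
slowly enough that `a_j ≤ M₀ + n` for `j ≤ cₙ` then bounds no orbit starting in `X`, so the
escaping and the bounded-unbounded points that the slow-escape hypothesis produces below `a`
lie outside `X`. Applied to `X = I(f), BU(f), UO(f)` this is a contradiction.
-/

open Filter Set

lemma Nat.exists_tendsto_atTop_le_of_le (c : ℕ → ℕ) :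
    ∃ g : ℕ → ℕ, Tendsto g atTop atTop ∧ ∀ n j, j ≤ c n → g j ≤ n := by
  set C : ℕ → ℕ := fun n => ∑ k ∈ Finset.range (n + 1), (c k + 1)
  have hC_mono : Monotone C := fun n n' h =>
    Finset.sum_le_sum_of_subset (Finset.range_subset_range.2 (by omega))
  have hc_le_C : ∀ n, c n ≤ C n := fun n =>
    (Nat.le_succ _).trans (Finset.single_le_sum (f := fun k => c k + 1)
      (fun _ _ => Nat.zero_le _) (Finset.self_mem_range_succ n))
  have hle_C : ∀ n, n ≤ C n := fun n => le_of_lt <| by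
    simpa using Finset.card_nsmul_le_sum (Finset.range (n + 1)) (fun k => c k + 1) 1
      (fun _ _ => by omega)
  classical
  -- `g j` is the least `n` with `j ≤ C n`, for the monotone majorant `C` of both `c` and `id`.
  have hex : ∀ j, ∃ n, j ≤ C n := fun j => ⟨j, hle_C j⟩
  refine ⟨fun j => Nat.find (hex j), tendsto_atTop.2 fun N => ?_,
    fun n j hj => Nat.find_min' (hex j) (hj.trans (hc_le_C n))⟩
  filter_upwards [eventually_gt_atTop (C N)] with j hj
  by_contra! hlt
  exact absurd ((Nat.find_spec (hex j)).trans (hC_mono hlt.le)) (by omega)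

section

variable {X : Type*} [TopologicalSpace X] {φ : ℕ → X → ℝ}

lemma IsCompact.exists_forall_exists_le_lt (hφ : ∀ m, LowerSemicontinuous (φ m)) {K : Set X}
    (hK : IsCompact K) (hunb : ∀ z ∈ K, ¬ BddAbove (range fun m => φ m z)) (R : ℝ) :
    ∃ M : ℕ, ∀ z ∈ K, ∃ j ≤ M, R < φ j z := by
  have hcover : K ⊆ ⋃ m, φ m ⁻¹' Ioi R := fun z hz => by
    obtain ⟨_, ⟨m, rfl⟩, hm⟩ := not_bddAbove_iff.1 (hunb z hz) R
    exact mem_iUnion.2 ⟨m, hm⟩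
  obtain ⟨t, ht⟩ := hK.elim_finite_subcover _ (fun m => (hφ m).isOpen_preimage R) hcover
  refine ⟨t.sup id, fun z hz => ?_⟩
  obtain ⟨m, hmt, hm⟩ := mem_iUnion₂.1 (ht hz)
  exact ⟨m, Finset.le_sup (f := id) hmt, hm⟩

lemma IsSigmaCompact.exists_tendsto_atTop_forall_notMem (hφ : ∀ m, LowerSemicontinuous (φ m))
    {S : Set X} (hS : IsSigmaCompact S) (hunb : ∀ z ∈ S, ¬ BddAbove (range fun m => φ m z))
    (M₀ : ℝ) :
    ∃ a : ℕ → ℝ, (∀ m, M₀ ≤ a m) ∧ Tendsto a atTop atTop ∧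
      ∀ z, (∀ m, φ m z ≤ a m) → z ∉ S := by
  obtain ⟨K, hK, rfl⟩ := hS
  choose c hc using fun n => (hK n).exists_forall_exists_le_lt hφ
    (fun z hz => hunb z (mem_iUnion_of_mem n hz)) (M₀ + n)
  obtain ⟨g, hg, hgc⟩ := Nat.exists_tendsto_atTop_le_of_le c
  refine ⟨fun j => M₀ + g j, fun j => by simp, tendsto_atTop_add_const_left _ _
    (tendsto_natCast_atTop_atTop.comp hg), fun z hz hzS => ?_⟩
  obtain ⟨n, hzn⟩ := mem_iUnion.1 hzS
  obtain ⟨j, hjc, hj⟩ := hc n z hzn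
  have : (g j : ℝ) ≤ n := by exact_mod_cast hgc n j hjc
  linarith [hz j]

end

theorem main_theorem (f : ℂ → ℂ) (hf : Continuous f)
    (I UO BU : Set ℂ)
    (hI : I = {z : ℂ | Filter.Tendsto (fun m : ℕ => ‖f^[m] z‖)
      Filter.atTop Filter.atTop})
    (hUO : UO = {z : ℂ | ¬ BddAbove (Set.range fun m : ℕ => ‖f^[m] z‖)})
    (hBU : BU = UO \ I)
    (hslow : ∀ R₀ : ℝ, 0 ≤ R₀ → ∃ M₀ > R₀, ∀ a : ℕ → ℝ, (∀ m, M₀ ≤ a m) →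
      Filter.Tendsto a Filter.atTop Filter.atTop →
      (∃ ζ : ℂ, (∀ m : ℕ, ‖f^[m] ζ‖ ≤ a m) ∧ ζ ∈ I) ∧
      (∃ ω : ℂ, (∀ m : ℕ, ‖f^[m] ω‖ ≤ a m) ∧ ω ∈ UO ∧ ω ∉ I)) :
    (∀ X : Set ℂ, X ⊆ UO → IsSigmaCompact X →
      (∃ ζ ∈ I, ζ ∉ X) ∧ (∃ ω ∈ BU, ω ∉ X)) ∧
    ¬ IsSigmaCompact I ∧ ¬ IsSigmaCompact BU ∧ ¬ IsSigmaCompact UO := by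
  have hI_sub : I ⊆ UO := fun z hz => by
    rw [hI] at hz
    rw [hUO]
    exact not_bddAbove_of_tendsto_atTop hz
  have avoid : ∀ X : Set ℂ, X ⊆ UO → IsSigmaCompact X →
      (∃ ζ ∈ I, ζ ∉ X) ∧ (∃ ω ∈ BU, ω ∉ X) := by
    intro X hXU hX
    obtain ⟨M₀, -, hM₀⟩ := hslow 0 le_rfl
    obtain ⟨a, haM₀, ha, hXa⟩ := hX.exists_tendsto_atTop_forall_notMem
      (fun m => ((hf.iterate m).norm).lowerSemicontinuous) (fun z hz => by
        simpa [hUO] using hXU hz) M₀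
    obtain ⟨⟨ζ, hζa, hζ⟩, ω, hωa, hω⟩ := hM₀ a haM₀ ha
    exact ⟨⟨ζ, hζ, hXa ζ hζa⟩, ω, hBU ▸ hω, hXa ω hωa⟩
  refine ⟨avoid, fun h => ?_, fun h => ?_, fun h => ?_⟩
  · obtain ⟨ζ, hζ, hζI⟩ := (avoid I hI_sub h).1
    exact hζI hζ
  · obtain ⟨ω, hω, hωBU⟩ := (avoid BU (hBU ▸ sdiff_subset) h).2
    exact hωBU hω
  · obtain ⟨ζ, hζ, hζUO⟩ := (avoid UO subset_rfl h).1
    exact hζUO (hI_sub hζ)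
end
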